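/- arXiv:1210.8408 — 4 statements merged into one kernel-verified Lean document; each statement's English description precedes it below -/
import Mathlib

section
/- Let r_n = P_n/Q_n be the n-th subdiagonal Padé approximation to exp, with P_n(z) = Σ_{j=0}^{n} [(2n+1−j)!·n!/((2n+1)!·j!·(n−j)!)] z^j and Q_n(z) = Σ_{j=0}^{n+1} [(2n+1−j)!·(n+1)!/((2n+1)!·j!·(n+1−j)!)] (−z)^j. For every z ∈ ℂ with Q_n(z) ≠ 0, r_n(z) − e^z = ((−1)^(n+2)/Q_n(z)) · (1/(2n+1)!) · z^(2n+2) · e^z · ∫_0^1 s^n (1−s)^(n+1) e^{−sz} ds. -/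
/-!
The weight `f(s) = sⁿ (1 - s)ⁿ⁺¹` is a polynomial of degree `2n + 1`, so integrating
`f(s) e^{-sz}` by parts `2n + 2` times gives
`z^{2n+2} ∫₀¹ f(s) e^{-sz} ds = ∑_k (f⁽ᵏ⁾(0) - e^{-z} f⁽ᵏ⁾(1)) z^{2n+1-k}`.
The derivatives at `0` and `1` are `k!` times the Taylor coefficients of
`f = ∑_j (-1)^j C(n+1, j) s^{n+j} = (-1)^{n+1} ∑_i C(n, i) (s - 1)^{n+1+i}`,
and the two boundary sums are `(-1)^{n+1} (2n+1)! Q_n(z)` and `(-1)^{n+1} (2n+1)! P_n(z)`.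
-/

open Finset

/-- Numerator of the n-th subdiagonal Padé approximation to the exponential. -/
noncomputable def padeP (n : ℕ) (z : ℂ) : ℂ :=
  ∑ j ∈ Finset.range (n + 1),
    ((Nat.factorial (2 * n + 1 - j) * Nat.factorial n : ℕ) : ℂ) /
      ((Nat.factorial (2 * n + 1) * Nat.factorial j * Nat.factorial (n - j) : ℕ) : ℂ) * z ^ j

/-- Denominator of the n-th subdiagonal Padé approximation to the exponential. -/
noncomputable def padeQ (n : ℕ) (z : ℂ) : ℂ :=
  ∑ j ∈ Finset.range (n + 2),
    ((Nat.factorial (2 * n + 1 - j) * Nat.factorial (n + 1) : ℕ) : ℂ) /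
      ((Nat.factorial (2 * n + 1) * Nat.factorial j * Nat.factorial (n + 1 - j) : ℕ) : ℂ) *
      (-z) ^ j

open Polynomial

theorem Finset.sum_range_choose_mul_of_lt {R : Type*} [Semiring R] {m N : ℕ} (h : m < N)
    (g : ℕ → R) :
    ∑ i ∈ range N, (m.choose i : R) * g i = ∑ i ∈ range (m + 1), (m.choose i : R) * g i := by
  refine (sum_subset (range_subset_range.mpr h) fun i _ hi => ?_).symm
  rw [Nat.choose_eq_zero_of_lt (by simpa using hi), Nat.cast_zero, zero_mul]

theorem factorial_mul_sum_factorial_div (N m : ℕ) (w : ℂ) :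
    (N.factorial : ℂ) * ∑ j ∈ range (m + 1),
      ((Nat.factorial (N - j) * Nat.factorial m : ℕ) : ℂ) /
        ((Nat.factorial N * Nat.factorial j * Nat.factorial (m - j) : ℕ) : ℂ) * w ^ j =
      ∑ j ∈ range (m + 1), ((N - j).factorial : ℂ) * (m.choose j : ℂ) * w ^ j := by
  rw [mul_sum]
  refine sum_congr rfl fun j hj => ?_
  rw [Nat.cast_choose ℂ (Nat.le_of_lt_succ (mem_range.mp hj))]
  have hN : (N.factorial : ℂ) ≠ 0 := Nat.cast_ne_zero.mpr N.factorial_ne_zero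
  push_cast
  field_simp

namespace Polynomial

noncomputable def iterDerivSum (p : ℂ[X]) (N : ℕ) (z w : ℂ) : ℂ :=
  ∑ k ∈ range N, (derivative^[k] p).eval w * z ^ (N - 1 - k)

theorem eval_iterate_derivative_eq_factorial_mul_coeff_taylor {R : Type*} [CommSemiring R]
    (p : R[X]) (r : R) (k : ℕ) :
    (derivative^[k] p).eval r = k.factorial * (taylor r p).coeff k := by
  rw [taylor_coeff, ← factorial_smul_hasseDeriv]
  simp [nsmul_eq_mul]

theorem iterDerivSum_eq_sum_coeff_taylor (p : ℂ[X]) (N : ℕ) (z r : ℂ) :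
    iterDerivSum p N z r =
      ∑ i ∈ range N, ((N - 1 - i).factorial : ℂ) * (taylor r p).coeff (N - 1 - i) * z ^ i := by
  rw [iterDerivSum, ← sum_range_reflect]
  refine sum_congr rfl fun i hi => ?_
  rw [eval_iterate_derivative_eq_factorial_mul_coeff_taylor,
    show N - 1 - (N - 1 - i) = i by have := mem_range.mp hi; omega]

theorem hasDerivAt_neg_cexp_mul_iterDerivSum (p : ℂ[X]) (N : ℕ) (z w : ℂ) :
    HasDerivAt (fun w => -Complex.exp (-w * z) * iterDerivSum p N z w)
      (Complex.exp (-w * z) * (z ^ N * p.eval w - (derivative^[N] p).eval w)) w := by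
  have hexp : HasDerivAt (fun w => -Complex.exp (-w * z)) (z * Complex.exp (-w * z)) w :=
    (((hasDerivAt_id w).neg.mul_const z).cexp).neg.congr_deriv (by simp; ring)
  have hsum := HasDerivAt.fun_sum (u := range N) fun k _ =>
    ((derivative^[k] p).hasDerivAt w).mul_const (z ^ (N - 1 - k))
  refine (hexp.mul hsum).congr_deriv ?_
  have hshift : ∀ k ∈ range N, z * ((derivative^[k] p).eval w * z ^ (N - 1 - k)) =
      (derivative^[k] p).eval w * z ^ (N - k) := by
    intro k hk
    rw [mul_left_comm, ← pow_succ', show N - 1 - k + 1 = N - k by have := mem_range.mp hk; omega]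
  have hsucc : ∀ k ∈ range N, (derivative (derivative^[k] p)).eval w * z ^ (N - 1 - k) =
      (derivative^[k + 1] p).eval w * z ^ (N - (k + 1)) := by
    intro k _
    rw [Function.iterate_succ_apply', Nat.sub_sub, Nat.add_comm 1 k]
  have htel := sum_range_sub' (fun k => (derivative^[k] p).eval w * z ^ (N - k)) N
  rw [sum_sub_distrib] at htel
  rw [mul_comm z, mul_assoc, mul_sum, sum_congr rfl hshift, sum_congr rfl hsucc]
  simp only [Function.iterate_zero, id, Nat.sub_zero, Nat.sub_self, pow_zero, mul_one] at htel
  linear_combination Complex.exp (-w * z) * htel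

/-- Repeated integration by parts; the factor `z ^ N` clears its denominators, so `z = 0` needs no
separate treatment. -/
theorem integral_eval_mul_cexp (p : ℂ[X]) {N : ℕ} (hN : derivative^[N] p = 0) (z : ℂ) (a b : ℝ) :
    z ^ N * ∫ s in a..b, p.eval (s : ℂ) * Complex.exp (-(s : ℂ) * z) =
      Complex.exp (-(a : ℂ) * z) * iterDerivSum p N z a
        - Complex.exp (-(b : ℂ) * z) * iterDerivSum p N z b := by
  have hcont : Continuous fun s : ℝ => z ^ N * (p.eval (s : ℂ) * Complex.exp (-(s : ℂ) * z)) := by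
    fun_prop
  rw [← intervalIntegral.integral_const_mul,
    intervalIntegral.integral_eq_sub_of_hasDerivAt
      (f := fun t : ℝ => -Complex.exp (-(t : ℂ) * z) * iterDerivSum p N z t)
      (fun t _ => (hasDerivAt_neg_cexp_mul_iterDerivSum p N z t).comp_ofReal.congr_deriv
        (by rw [hN, eval_zero, sub_zero]; ring))
      (hcont.intervalIntegrable a b)]
  ring

end Polynomial

noncomputable def perronPoly (n : ℕ) : ℂ[X] := X ^ n * (1 - X) ^ (n + 1)

@[simp]
theorem eval_perronPoly (n : ℕ) (w : ℂ) : (perronPoly n).eval w = w ^ n * (1 - w) ^ (n + 1) := by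
  simp [perronPoly]

theorem iterate_derivative_perronPoly (n : ℕ) : derivative^[2 * n + 2] (perronPoly n) = 0 := by
  refine iterate_derivative_eq_zero (Nat.lt_succ_of_le ?_)
  unfold perronPoly
  compute_degree!
  omega

theorem coeff_perronPoly {n i : ℕ} (hi : i < 2 * n + 2) :
    (perronPoly n).coeff (2 * n + 1 - i) = (-1) ^ (n + 1) * (-1) ^ i * ((n + 1).choose i : ℂ) := by
  have hpoly : perronPoly n = C ((-1) ^ (n + 1)) * (X ^ n * (X + C (-1)) ^ (n + 1)) := by
    have h1X : (1 - X : ℂ[X]) = C (-1) * (X + C (-1)) := by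
      simp only [map_neg, map_one]
      ring
    rw [perronPoly, h1X, mul_pow, ← C_pow]
    ring
  rw [hpoly, coeff_C_mul, coeff_X_pow_mul']
  split_ifs with h
  · rw [coeff_X_add_C_pow, show 2 * n + 1 - i - n = n + 1 - i by omega,
      show n + 1 - (n + 1 - i) = i by omega, Nat.choose_symm (by omega)]
    ring
  · rw [Nat.choose_eq_zero_of_lt (by omega)]
    simp

theorem coeff_taylor_one_perronPoly {n i : ℕ} (hi : i < 2 * n + 2) :
    (taylor 1 (perronPoly n)).coeff (2 * n + 1 - i) = (-1) ^ (n + 1) * (n.choose i : ℂ) := by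
  have hpoly : taylor 1 (perronPoly n) = C ((-1) ^ (n + 1)) * (X ^ (n + 1) * (X + C 1) ^ n) := by
    simp only [perronPoly, taylor_apply, mul_comp, pow_comp, X_comp, sub_comp, one_comp, map_pow,
      map_neg, map_one]
    ring
  rw [hpoly, coeff_C_mul, coeff_X_pow_mul']
  split_ifs with h
  · rw [coeff_X_add_C_pow, one_pow, one_mul, show 2 * n + 1 - i - (n + 1) = n - i by omega,
      Nat.choose_symm (by omega)]
  · rw [Nat.choose_eq_zero_of_lt (by omega)]
    simp

theorem iterDerivSum_perronPoly_zero (n : ℕ) (z : ℂ) :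
    iterDerivSum (perronPoly n) (2 * n + 2) z 0 =
      (-1) ^ (n + 1) * ∑ j ∈ range (n + 2), ((2 * n + 1 - j).factorial : ℂ) *
        ((n + 1).choose j : ℂ) * (-z) ^ j := by
  calc iterDerivSum (perronPoly n) (2 * n + 2) z 0
      = ∑ j ∈ range (2 * n + 2), ((n + 1).choose j : ℂ) *
          ((-1) ^ (n + 1) * (2 * n + 1 - j).factorial * (-z) ^ j) := by
        rw [iterDerivSum_eq_sum_coeff_taylor, taylor_zero, show 2 * n + 2 - 1 = 2 * n + 1 from rfl]
        refine sum_congr rfl fun j hj => ?_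
        rw [coeff_perronPoly (mem_range.mp hj), neg_pow z]
        ring
    _ = ∑ j ∈ range (n + 2), ((n + 1).choose j : ℂ) *
          ((-1) ^ (n + 1) * (2 * n + 1 - j).factorial * (-z) ^ j) :=
        sum_range_choose_mul_of_lt (by omega) _
    _ = _ := by
        rw [mul_sum]
        exact sum_congr rfl fun j _ => by ring

theorem iterDerivSum_perronPoly_one (n : ℕ) (z : ℂ) :
    iterDerivSum (perronPoly n) (2 * n + 2) z 1 =
      (-1) ^ (n + 1) * ∑ j ∈ range (n + 1), ((2 * n + 1 - j).factorial : ℂ) *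
        (n.choose j : ℂ) * z ^ j := by
  calc iterDerivSum (perronPoly n) (2 * n + 2) z 1
      = ∑ j ∈ range (2 * n + 2), (n.choose j : ℂ) *
          ((-1) ^ (n + 1) * (2 * n + 1 - j).factorial * z ^ j) := by
        rw [iterDerivSum_eq_sum_coeff_taylor, show 2 * n + 2 - 1 = 2 * n + 1 from rfl]
        refine sum_congr rfl fun j hj => ?_
        rw [coeff_taylor_one_perronPoly (mem_range.mp hj)]
        ring
    _ = ∑ j ∈ range (n + 1), (n.choose j : ℂ) *
          ((-1) ^ (n + 1) * (2 * n + 1 - j).factorial * z ^ j) :=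
        sum_range_choose_mul_of_lt (by omega) _
    _ = _ := by
        rw [mul_sum]
        exact sum_congr rfl fun j _ => by ring

theorem factorial_mul_padeP (n : ℕ) (z : ℂ) :
    ((2 * n + 1).factorial : ℂ) * padeP n z =
      ∑ j ∈ range (n + 1), ((2 * n + 1 - j).factorial : ℂ) * (n.choose j : ℂ) * z ^ j :=
  factorial_mul_sum_factorial_div _ _ _

theorem factorial_mul_padeQ (n : ℕ) (z : ℂ) :
    ((2 * n + 1).factorial : ℂ) * padeQ n z =
      ∑ j ∈ range (n + 2), ((2 * n + 1 - j).factorial : ℂ) * ((n + 1).choose j : ℂ) * (-z) ^ j :=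
  factorial_mul_sum_factorial_div _ _ _

/-- Perron's representation of the Padé error term. -/
theorem perron_representation (n : ℕ) (z : ℂ) (hQ : padeQ n z ≠ 0) :
    padeP n z / padeQ n z - Complex.exp z
      = (-1 : ℂ) ^ (n + 2) / padeQ n z * (1 / ((Nat.factorial (2 * n + 1) : ℕ) : ℂ))
          * z ^ (2 * n + 2) * Complex.exp z
          * ∫ s in (0 : ℝ)..1, (s : ℂ) ^ n * (1 - (s : ℂ)) ^ (n + 1)
              * Complex.exp (-(s : ℂ) * z) := by
  set I := ∫ s in (0 : ℝ)..1, (s : ℂ) ^ n * (1 - (s : ℂ)) ^ (n + 1) * Complex.exp (-(s : ℂ) * z)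
  have hI : z ^ (2 * n + 2) * I = (-1) ^ (n + 1) * ((2 * n + 1).factorial * padeQ n z)
      - Complex.exp (-z) * ((-1) ^ (n + 1) * ((2 * n + 1).factorial * padeP n z)) := by
    have h := integral_eval_mul_cexp (perronPoly n) (iterate_derivative_perronPoly n) z 0 1
    simp only [eval_perronPoly, Complex.ofReal_zero, Complex.ofReal_one, neg_zero, zero_mul,
      Complex.exp_zero, one_mul, neg_one_mul, iterDerivSum_perronPoly_zero,
      iterDerivSum_perronPoly_one, ← factorial_mul_padeP, ← factorial_mul_padeQ] at h
    exact h
  have hsign : (-1 : ℂ) ^ (n + 2) * (-1) ^ (n + 1) = -1 := by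
    rw [← pow_add]
    exact Odd.neg_one_pow ⟨n + 1, by ring⟩
  have hexp : Complex.exp z * Complex.exp (-z) = 1 := by
    rw [← Complex.exp_add, add_neg_cancel, Complex.exp_zero]
  have hfac : ((2 * n + 1).factorial : ℂ) ≠ 0 := Nat.cast_ne_zero.mpr (Nat.factorial_ne_zero _)
  field_simp
  linear_combination (-Complex.exp z * (-1) ^ (n + 2)) * hI
    - (2 * n + 1).factorial * padeP n z * hexp
    + ((2 * n + 1).factorial * padeP n z * Complex.exp z * Complex.exp (-z)
      - (2 * n + 1).factorial * padeQ n z * Complex.exp z) * hsign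
end

section
/- Let n ∈ ℕ and α ∈ (1/2, n + 1/2]. Suppose g : ℝ → ℂ satisfies |g(t)| ≤ min{ (1/2)·(n!/(2n+1)!)^2·|t|^{2n+2−α}, 2·|t|^{−α} } for all t ≠ 0. Then the L²(ℝ)-norm of g satisfies ‖g‖_{L²(ℝ)} ≤ (4/√(2α−1))·(n+1)^{−α+1/2}. -/
/-!
Squaring the hypothesis gives `‖g t‖² ≤ min (a |t|^p) (b |t|^(-q))` with `p = 4n + 4 - 2α`,
`q = 2α`, `a = K²/4`, `b = 4`, `K = (n!/(2n+1)!)²`. Splitting the integral at `T = n + 1`, the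
near part contributes `a T^(p+1)/(p+1)` and the tail `b T^(1-q)/(q-1)`. Since
`n! (n+1)^(n+1) ≤ (2n+1)!`, we have `a T^(p+q) ≤ b`, and `α ≤ n + 1/2` gives `q - 1 ≤ p + 1`,
so the near part is at most the tail and `‖g‖₂² ≤ 16 T^(1-2α)/(2α-1)`.
-/

open MeasureTheory Set
open scoped ENNReal

theorem lintegral_comp_abs (f : ℝ → ℝ≥0∞) :
    ∫⁻ x, f |x| = 2 * ∫⁻ x in Ioi 0, f x := by
  have h_pos : ∫⁻ x in Ici 0, f |x| = ∫⁻ x in Ioi 0, f x := by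
    rw [← Measure.restrict_congr_set Ioi_ae_eq_Ici]
    exact setLIntegral_congr_fun measurableSet_Ioi fun x hx ↦ by rw [abs_of_pos hx]
  have h_neg : ∫⁻ x in Iio 0, f |x| = ∫⁻ x in Ioi 0, f x := by
    have h_refl :=
      (Measure.measurePreserving_neg (volume : Measure ℝ)).setLIntegral_comp_preimage_emb
        measurableEmbedding_neg f (Ioi 0)
    rw [neg_preimage, neg_Ioi, neg_zero] at h_refl
    rw [← h_refl]
    exact setLIntegral_congr_fun measurableSet_Iio fun x hx ↦ by rw [abs_of_neg hx]
  rw [← lintegral_add_compl _ measurableSet_Ici, compl_Ici, h_pos, h_neg, two_mul]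

theorem lintegral_Ioc_ofReal_mul_rpow {a p T : ℝ} (ha : 0 ≤ a) (hp : -1 < p) (hT : 0 ≤ T) :
    ∫⁻ t in Ioc 0 T, ENNReal.ofReal (a * t ^ p)
      = ENNReal.ofReal (a * T ^ (p + 1) / (p + 1)) := by
  have h_int : IntegrableOn (fun t : ℝ ↦ a * t ^ p) (Ioc 0 T) :=
    ((intervalIntegral.intervalIntegrable_rpow' hp).const_mul a).1
  rw [← ofReal_integral_eq_lintegral_ofReal h_int, ← intervalIntegral.integral_of_le hT,
    intervalIntegral.integral_const_mul, integral_rpow (Or.inl hp),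
    Real.zero_rpow (by linarith), sub_zero, mul_div_assoc]
  filter_upwards [self_mem_ae_restrict measurableSet_Ioc] with t ht
  exact mul_nonneg ha (Real.rpow_nonneg ht.1.le p)

theorem lintegral_Ioi_ofReal_mul_rpow_neg {b q T : ℝ} (hb : 0 ≤ b) (hq : 1 < q) (hT : 0 < T) :
    ∫⁻ t in Ioi T, ENNReal.ofReal (b * t ^ (-q))
      = ENNReal.ofReal (b * T ^ (1 - q) / (q - 1)) := by
  have h_int : IntegrableOn (fun t : ℝ ↦ b * t ^ (-q)) (Ioi T) :=
    (integrableOn_Ioi_rpow_of_lt (by linarith) hT).const_mul b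
  rw [← ofReal_integral_eq_lintegral_ofReal h_int, integral_const_mul,
    integral_Ioi_rpow_of_lt (by linarith) hT, neg_add_eq_sub, neg_div, ← div_neg, neg_sub,
    mul_div_assoc]
  filter_upwards [self_mem_ae_restrict measurableSet_Ioi] with t ht
  exact mul_nonneg hb (Real.rpow_nonneg (hT.trans ht).le _)

theorem lintegral_Ioi_min_rpow_le {a b p q T : ℝ} (ha : 0 ≤ a) (hb : 0 ≤ b) (hp : -1 < p)
    (hq : 1 < q) (hT : 0 < T) :
    ∫⁻ t in Ioi 0, ENNReal.ofReal (min (a * t ^ p) (b * t ^ (-q)))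
      ≤ ENNReal.ofReal (a * T ^ (p + 1) / (p + 1))
        + ENNReal.ofReal (b * T ^ (1 - q) / (q - 1)) := by
  rw [← Ioc_union_Ioi_eq_Ioi hT.le, lintegral_union measurableSet_Ioi (Ioc_disjoint_Ioi le_rfl),
    ← lintegral_Ioc_ofReal_mul_rpow ha hp hT.le, ← lintegral_Ioi_ofReal_mul_rpow_neg hb hq hT]
  gcongr with t t <;> simp

theorem lintegral_min_rpow_abs_le {a b p q T : ℝ} (ha : 0 ≤ a) (hb : 0 ≤ b) (hq : 1 < q)
    (hpq : q - 1 ≤ p + 1) (hT : 0 < T) (h_cross : a * T ^ (p + q) ≤ b) :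
    ∫⁻ t, ENNReal.ofReal (min (a * |t| ^ p) (b * |t| ^ (-q)))
      ≤ ENNReal.ofReal (4 * b * T ^ (1 - q) / (q - 1)) := by
  have hq1 : 0 < q - 1 := by linarith
  have h_tail : 0 ≤ b * T ^ (1 - q) / (q - 1) := by positivity
  have h_near : a * T ^ (p + 1) / (p + 1) ≤ b * T ^ (1 - q) / (q - 1) := calc
    a * T ^ (p + 1) / (p + 1) = a * T ^ (p + q) * T ^ (1 - q) / (p + 1) := by
      rw [mul_assoc, ← Real.rpow_add hT]; ring_nf
    _ ≤ b * T ^ (1 - q) / (q - 1) := by gcongr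
  calc ∫⁻ t, ENNReal.ofReal (min (a * |t| ^ p) (b * |t| ^ (-q)))
      = 2 * ∫⁻ t in Ioi 0, ENNReal.ofReal (min (a * t ^ p) (b * t ^ (-q))) :=
        lintegral_comp_abs (fun t ↦ ENNReal.ofReal (min (a * t ^ p) (b * t ^ (-q))))
    _ ≤ 2 * (ENNReal.ofReal (a * T ^ (p + 1) / (p + 1))
          + ENNReal.ofReal (b * T ^ (1 - q) / (q - 1))) := by
        gcongr; exact lintegral_Ioi_min_rpow_le ha hb (by linarith) hq hT
    _ ≤ 2 * (ENNReal.ofReal (b * T ^ (1 - q) / (q - 1))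
          + ENNReal.ofReal (b * T ^ (1 - q) / (q - 1))) := by gcongr
    _ = ENNReal.ofReal (4 * b * T ^ (1 - q) / (q - 1)) := by
        rw [← ENNReal.ofReal_add h_tail h_tail, ← ENNReal.ofReal_ofNat 2,
          ← ENNReal.ofReal_mul zero_le_two]
        ring_nf

theorem eLpNorm_two_le_ofReal {X E : Type*} [MeasurableSpace X] {μ : Measure X}
    [NormedAddCommGroup E] {f : X → E} {C : ℝ} (hC : 0 ≤ C)
    (h : ∫⁻ x, ‖f x‖ₑ ^ 2 ∂μ ≤ ENNReal.ofReal (C ^ 2)) :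
    eLpNorm f 2 μ ≤ ENNReal.ofReal C := by
  rw [eLpNorm_eq_lintegral_rpow_enorm_toReal two_ne_zero ENNReal.ofNat_ne_top,
    ENNReal.toReal_ofNat, ← Real.sqrt_sq hC, Real.sqrt_eq_rpow,
    ← ENNReal.ofReal_rpow_of_nonneg (sq_nonneg C) (by norm_num)]
  simp only [ENNReal.rpow_two]
  gcongr

theorem factorial_div_factorial_mul_pow_le_one (n : ℕ) :
    (Nat.factorial n : ℝ) / (Nat.factorial (2 * n + 1) : ℝ) * ((n : ℝ) + 1) ^ (n + 1) ≤ 1 := by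
  rw [div_mul_eq_mul_div, div_le_one (by positivity)]
  have h := Nat.factorial_mul_pow_le_factorial (m := n) (n := n + 1)
  rw [← add_assoc, ← two_mul] at h
  exact_mod_cast h

theorem pade_modified_error_L2_bound (n : ℕ) (α : ℝ) (hα1 : 1 / 2 < α)
    (hα2 : α ≤ (n : ℝ) + 1 / 2) (g : ℝ → ℂ)
    (hg : ∀ t : ℝ, t ≠ 0 → ‖g t‖ ≤ min
      (1 / 2 * ((Nat.factorial n : ℝ) / (Nat.factorial (2 * n + 1) : ℝ)) ^ 2
        * |t| ^ (2 * (n : ℝ) + 2 - α))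
      (2 * |t| ^ (-α))) :
    eLpNorm g 2 volume
      ≤ ENNReal.ofReal (4 / Real.sqrt (2 * α - 1) * ((n : ℝ) + 1) ^ (-α + 1 / 2)) := by
  set r : ℝ := (Nat.factorial n : ℝ) / (Nat.factorial (2 * n + 1) : ℝ)
  set T : ℝ := (n : ℝ) + 1
  have hT : 0 < T := by positivity
  have h_sq : ∀ t : ℝ, t ≠ 0 → ‖g t‖ₑ ^ 2 ≤ ENNReal.ofReal (min
      ((1 / 2 * r ^ 2) ^ 2 * |t| ^ ((2 * (n : ℝ) + 2 - α) * 2))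
      (2 ^ 2 * |t| ^ (-(2 * α)))) := by
    intro t ht
    have hgt := hg t ht
    rw [← ofReal_norm, ← ENNReal.ofReal_pow (norm_nonneg _), show -(2 * α) = -α * 2 by ring,
      Real.rpow_mul (abs_nonneg t), Real.rpow_mul (abs_nonneg t), Real.rpow_two, Real.rpow_two,
      ← mul_pow, ← mul_pow]
    gcongr
    exact le_min (pow_le_pow_left₀ (norm_nonneg _) (hgt.trans (min_le_left _ _)) 2)
      (pow_le_pow_left₀ (norm_nonneg _) (hgt.trans (min_le_right _ _)) 2)
  have h_cross : (1 / 2 * r ^ 2) ^ 2 * T ^ ((2 * (n : ℝ) + 2 - α) * 2 + 2 * α) ≤ 2 ^ 2 := by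
    have h_fact : r * T ^ (n + 1) ≤ 1 := factorial_div_factorial_mul_pow_le_one n
    rw [show (2 * (n : ℝ) + 2 - α) * 2 + 2 * α = (((n + 1) * 4 : ℕ) : ℝ) by push_cast; ring,
      Real.rpow_natCast, pow_mul, show (1 / 2 * r ^ 2) ^ 2 * (T ^ (n + 1)) ^ 4
        = (r * T ^ (n + 1)) ^ 4 / 4 by ring]
    linarith [pow_le_one₀ (by positivity) h_fact (n := 4)]
  refine eLpNorm_two_le_ofReal (by positivity) ?_
  calc ∫⁻ t, ‖g t‖ₑ ^ 2
      ≤ ∫⁻ t, ENNReal.ofReal (min ((1 / 2 * r ^ 2) ^ 2 * |t| ^ ((2 * (n : ℝ) + 2 - α) * 2))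
          (2 ^ 2 * |t| ^ (-(2 * α)))) :=
        lintegral_mono_ae (by filter_upwards [Measure.ae_ne volume 0] with t ht using h_sq t ht)
    _ ≤ ENNReal.ofReal (4 * 2 ^ 2 * T ^ (1 - 2 * α) / (2 * α - 1)) :=
        lintegral_min_rpow_abs_le (by positivity) (by positivity) (by linarith) (by linarith) hT
          h_cross
    _ = ENNReal.ofReal ((4 / Real.sqrt (2 * α - 1) * T ^ (-α + 1 / 2)) ^ 2) := by
        rw [mul_pow, div_pow, Real.sq_sqrt (by linarith), ← Real.rpow_mul_natCast hT.le]
        ring_nf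
end

section
/- (Carlson's inequality) Let g ∈ L²(ℝ) be such that the function t ↦ t·g(t) is also in L²(ℝ). Then g ∈ L¹(ℝ) and ‖g‖_{L¹(ℝ)} ≤ √(2π) · ‖g‖_{L²(ℝ)}^{1/2} · ‖t·g(t)‖_{L²(ℝ)}^{1/2}. -/
/-!
For any weight `w > 0`, Cauchy–Schwarz applied to `|g| = (√w |g|) · (1 / √w)` gives
`∫ |g| ≤ (∫ w |g|²)^(1/2) (∫ 1/w)^(1/2)`. With `w t = r + t² / r` the second factor is `√π` for
every `r > 0`, the first is `(r ‖g‖₂² + ‖t g‖₂² / r)^(1/2)`, and `r = ‖t g‖₂ / ‖g‖₂` turns it into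
`(2 ‖g‖₂ ‖t g‖₂)^(1/2)`. If either norm vanishes, `g = 0` almost everywhere.
-/

open MeasureTheory Real
open scoped ENNReal

section

variable {α E : Type*} [MeasurableSpace α] {μ : Measure α} [NormedAddCommGroup E]

theorem MeasureTheory.MemLp.integral_norm_sq_eq {f : α → E} (hf : MemLp f 2 μ) :
    ∫ x, ‖f x‖ ^ 2 ∂μ = (eLpNorm f 2 μ).toReal ^ 2 := by
  rw [hf.eLpNorm_eq_integral_rpow_norm two_ne_zero ENNReal.ofNat_ne_top,
    ENNReal.toReal_ofReal (by positivity), ← rpow_natCast, ← rpow_mul (by positivity)]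
  norm_num

theorem ae_eq_zero_of_toReal_eLpNorm_eq_zero {p : ℝ≥0∞} {f : α → E} (hf : MemLp f p μ)
    (hp : p ≠ 0) (h : (eLpNorm f p μ).toReal = 0) : f =ᵐ[μ] 0 :=
  (eLpNorm_eq_zero_iff hf.1 hp).1 (((ENNReal.toReal_eq_zero_iff _).1 h).resolve_right hf.2.ne)

theorem integrable_and_integral_norm_le_of_weight {f : α → E} {w : α → ℝ}
    (hf : AEStronglyMeasurable f μ) (hw : ∀ᵐ x ∂μ, 0 < w x)
    (hwf : Integrable (fun x => w x * ‖f x‖ ^ 2) μ) (hw_inv : Integrable (fun x => (w x)⁻¹) μ) :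
    Integrable f μ ∧ ∫ x, ‖f x‖ ∂μ ≤ √(∫ x, w x * ‖f x‖ ^ 2 ∂μ) * √(∫ x, (w x)⁻¹ ∂μ) := by
  set F : α → ℝ := fun x => √(w x) * ‖f x‖
  set G : α → ℝ := fun x => (√(w x))⁻¹
  have hw_meas : AEMeasurable w μ := by simpa [Pi.inv_def] using hw_inv.aemeasurable.inv
  have hF_sq : (fun x => w x * ‖f x‖ ^ 2) =ᵐ[μ] fun x => F x ^ 2 := by
    filter_upwards [hw] with x hx
    simp [F, mul_pow, sq_sqrt hx.le]
  have hG_sq : (fun x => (w x)⁻¹) =ᵐ[μ] fun x => G x ^ 2 := by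
    filter_upwards [hw] with x hx
    simp [G, inv_pow, sq_sqrt hx.le]
  have hF : MemLp F 2 μ :=
    (memLp_two_iff_integrable_sq (hw_meas.sqrt.aestronglyMeasurable.mul hf.norm)).2
      (hwf.congr hF_sq)
  have hG : MemLp G 2 μ :=
    (memLp_two_iff_integrable_sq hw_meas.sqrt.inv.aestronglyMeasurable).2 (hw_inv.congr hG_sq)
  have hFG : (fun x => ‖f x‖) =ᵐ[μ] fun x => F x * G x := by
    filter_upwards [hw] with x hx
    have := (sqrt_pos.2 hx).ne'
    simp only [F, G]
    field_simp
  refine ⟨(integrable_norm_iff hf).1 ((hF.integrable_mul hG).congr hFG.symm), ?_⟩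
  have hholder := integral_mul_le_Lp_mul_Lq_of_nonneg HolderConjugate.two_two
    (.of_forall fun x => mul_nonneg (sqrt_nonneg _) (norm_nonneg _))
    (.of_forall fun x => inv_nonneg.2 (sqrt_nonneg _))
    (by simpa using hF) (by simpa using hG)
  simp only [rpow_two, ← sqrt_eq_rpow] at hholder
  rwa [integral_congr_ae hFG, integral_congr_ae hF_sq, integral_congr_ae hG_sq]

end

theorem ae_eq_zero_of_smul_id_ae_eq_zero {E : Type*} [NormedAddCommGroup E] [NormedSpace ℝ E]
    {μ : Measure ℝ} [NullSingletonClass μ] {g : ℝ → E} (h : (fun t => t • g t) =ᵐ[μ] 0) :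
    g =ᵐ[μ] 0 := by
  filter_upwards [h, μ.ae_ne 0] with t ht ht0
  simpa [ht0] using ht

theorem inv_add_sq_div_eq {r : ℝ} (hr : 0 < r) (t : ℝ) :
    (r + t ^ 2 / r)⁻¹ = r⁻¹ * (1 + (r⁻¹ * t) ^ 2)⁻¹ := by
  field_simp

theorem integrable_inv_add_sq_div {r : ℝ} (hr : 0 < r) :
    Integrable (fun t : ℝ => (r + t ^ 2 / r)⁻¹) := by
  simp_rw [inv_add_sq_div_eq hr]
  exact (integrable_inv_one_add_sq.comp_mul_left' (inv_ne_zero hr.ne')).const_mul _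

theorem integral_inv_add_sq_div {r : ℝ} (hr : 0 < r) : ∫ t : ℝ, (r + t ^ 2 / r)⁻¹ = π := by
  simp_rw [inv_add_sq_div_eq hr]
  rw [integral_const_mul, Measure.integral_comp_mul_left (fun u => (1 + u ^ 2)⁻¹) r⁻¹,
    integral_univ_inv_one_add_sq, inv_inv, abs_of_pos hr, smul_eq_mul, inv_mul_cancel_left₀ hr.ne']

theorem integrable_and_integral_norm_le_of_memLp_smul_id {E : Type*} [NormedAddCommGroup E]
    [NormedSpace ℝ E] {g : ℝ → E} (hg : MemLp g 2) (htg : MemLp (fun t => t • g t) 2)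
    {r : ℝ} (hr : 0 < r) :
    Integrable g ∧ ∫ t, ‖g t‖ ≤
      √(r * (eLpNorm g 2).toReal ^ 2 + (eLpNorm (fun t => t • g t) 2).toReal ^ 2 / r) * √π := by
  have hweight : ∀ t, (r + t ^ 2 / r) * ‖g t‖ ^ 2 = r * ‖g t‖ ^ 2 + ‖t • g t‖ ^ 2 / r := by
    intro t
    rw [norm_smul, mul_pow, norm_eq_abs, sq_abs]
    ring
  have hg_sq := (memLp_two_iff_integrable_sq_norm hg.1).1 hg
  have htg_sq := (memLp_two_iff_integrable_sq_norm htg.1).1 htg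
  simp_rw [← hg.integral_norm_sq_eq, ← htg.integral_norm_sq_eq, ← integral_inv_add_sq_div hr,
    ← integral_const_mul, ← integral_div, ← integral_add (hg_sq.const_mul r) (htg_sq.div_const r),
    ← hweight]
  refine integrable_and_integral_norm_le_of_weight hg.1 (.of_forall fun t => by positivity) ?_
    (integrable_inv_add_sq_div hr)
  simp_rw [hweight]
  exact (hg_sq.const_mul r).add (htg_sq.div_const r)

/-- Carlson's inequality. -/
theorem carlson_inequality (g : ℝ → ℂ) (hg : MemLp g 2 volume)
    (htg : MemLp (fun t : ℝ => t • g t) 2 volume) :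
    Integrable g volume ∧
      ∫ t : ℝ, ‖g t‖
        ≤ Real.sqrt (2 * Real.pi) * ((eLpNorm g 2 volume).toReal) ^ ((1 : ℝ) / 2)
            * ((eLpNorm (fun t : ℝ => t • g t) 2 volume).toReal) ^ ((1 : ℝ) / 2) := by
  set N₁ := (eLpNorm g 2 volume).toReal
  set N₂ := (eLpNorm (fun t : ℝ => t • g t) 2 volume).toReal
  have hbound := fun r (hr : 0 < r) => integrable_and_integral_norm_le_of_memLp_smul_id hg htg hr
  refine ⟨(hbound 1 one_pos).1, ?_⟩
  rw [← sqrt_eq_rpow, ← sqrt_eq_rpow]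
  by_cases hdeg : N₁ = 0 ∨ N₂ = 0
  · have hg0 : g =ᵐ[volume] 0 := hdeg.elim (ae_eq_zero_of_toReal_eLpNorm_eq_zero hg two_ne_zero)
      fun h => ae_eq_zero_of_smul_id_ae_eq_zero
        (ae_eq_zero_of_toReal_eLpNorm_eq_zero htg two_ne_zero h)
    rw [integral_eq_zero_of_ae (by filter_upwards [hg0] with t ht; simp [ht])]
    positivity
  obtain ⟨hN₁, hN₂⟩ := not_or.1 hdeg
  have hr : 0 < N₂ / N₁ :=
    div_pos (ENNReal.toReal_nonneg.lt_of_ne' hN₂) (ENNReal.toReal_nonneg.lt_of_ne' hN₁)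
  have hopt : N₂ / N₁ * N₁ ^ 2 + N₂ ^ 2 / (N₂ / N₁) = 2 * N₁ * N₂ := by
    field_simp
    ring
  calc ∫ t, ‖g t‖ ≤ √(2 * N₁ * N₂) * √π := hopt ▸ (hbound _ hr).2
    _ = √(2 * π) * √N₁ * √N₂ := by
      rw [sqrt_mul (by positivity), sqrt_mul (by positivity), sqrt_mul (by positivity)]
      ring
end

section
/- Let X be a Banach space, let (T(t))_{t≥0} be a strongly continuous semigroup on X with generator −A, and let S ∈ L(X) and C ≥ 0, k ≥ 1 be such that ‖Sx‖ ≤ C‖A^k x‖ for all x ∈ D(A^k). Then for every x ∈ D(A^{k−1}) with L := limsup_{t↓0} (1/t)‖T(t)A^{k−1}x − A^{k−1}x‖ < ∞, one has ‖Sx‖ ≤ C·L. -/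
open Filter Topology Set MeasureTheory intervalIntegral
open scoped ENNReal

/-- The generator `A` of the semigroup `T`, where `-A` is the infinitesimal generator:
`A x = -lim_{t↓0} t⁻¹ (T(t)x - x)`. -/
noncomputable def genA {X : Type*} [NormedAddCommGroup X] [NormedSpace ℝ X]
    (T : ℝ → X →L[ℝ] X) (x : X) : X :=
  -limUnder (𝓝[>] (0 : ℝ)) (fun t => t⁻¹ • (T t x - x))

/-- Membership in the domain of the generator. -/
def inDom {X : Type*} [NormedAddCommGroup X] [NormedSpace ℝ X]
    (T : ℝ → X →L[ℝ] X) (x : X) : Prop :=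
  ∃ y : X, Tendsto (fun t => t⁻¹ • (T t x - x)) (𝓝[>] (0 : ℝ)) (𝓝 y)

/-- Membership in the domain of the k-th power of the generator. -/
def inDomPow {X : Type*} [NormedAddCommGroup X] [NormedSpace ℝ X]
    (T : ℝ → X →L[ℝ] X) : ℕ → X → Prop
  | 0, _ => True
  | k + 1, x => inDom T x ∧ inDomPow T k (genA T x)

/-! The Cesàro means `x_t = t⁻¹ ∫₀ᵗ T(s)x ds` smooth out `x`: for every `x`, `x_t ∈ D(A)` with
`A x_t = t⁻¹(x - T(t)x)`, and on `D(A)` the generator commutes with `x ↦ x_t` (fundamental theorem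
of calculus for `s ↦ T(s)x`). Hence `x ∈ D(A^{k-1})` gives `x_t ∈ D(A^k)` and
`A^k x_t = t⁻¹(y - T(t)y)` with `y = A^{k-1}x`, so `‖S x_t‖ ≤ C t⁻¹‖T(t)y - y‖`; since `x_t → x`
as `t ↓ 0`, passing to the limsup gives the estimate. -/

theorem le_mul_toReal_limsup_ofReal {α : Type*} {l : Filter α} [NeBot l] {f g : α → ℝ}
    {a C : ℝ} (hC : 0 ≤ C) (hf : Tendsto f l (𝓝 a)) (hfg : ∀ᶠ x in l, f x ≤ C * g x)
    (hg : limsup (fun x => ENNReal.ofReal (g x)) l ≠ ∞) :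
    a ≤ C * (limsup (fun x => ENNReal.ofReal (g x)) l).toReal := by
  rw [← ENNReal.toReal_ofReal hC, ← ENNReal.toReal_mul,
    ← ENNReal.ofReal_le_iff_le_toReal (ENNReal.mul_ne_top ENNReal.ofReal_ne_top hg)]
  calc ENNReal.ofReal a = limsup (fun x => ENNReal.ofReal (f x)) l :=
        ((ENNReal.continuous_ofReal.tendsto a).comp hf).limsup_eq.symm
    _ ≤ limsup (fun x => ENNReal.ofReal C * ENNReal.ofReal (g x)) l :=
        limsup_le_limsup <| hfg.mono fun _ hx =>
          (ENNReal.ofReal_le_ofReal hx).trans_eq (ENNReal.ofReal_mul hC)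
    _ = ENNReal.ofReal C * limsup (fun x => ENNReal.ofReal (g x)) l :=
        ENNReal.limsup_const_mul_of_ne_top ENNReal.ofReal_ne_top

theorem ContinuousOn.intervalIntegrable_of_Ici {E : Type*} [NormedAddCommGroup E]
    {f : ℝ → E} (hf : ContinuousOn f (Ici 0)) {a b : ℝ} (ha : 0 ≤ a) (hb : 0 ≤ b) :
    IntervalIntegrable f volume a b :=
  (hf.mono fun _ hs => le_trans (le_min ha hb) hs.1).intervalIntegrable

section RightDerivative

variable {E : Type*} [NormedAddCommGroup E] [NormedSpace ℝ E]

theorem hasDerivWithinAt_Ioi_iff_tendsto_slope_zero_right {f : ℝ → E} {f' : E} {x : ℝ} :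
    HasDerivWithinAt f f' (Ioi x) x ↔
      Tendsto (fun t => t⁻¹ • (f (x + t) - f x)) (𝓝[>] 0) (𝓝 f') := by
  have : 𝓝[>] x = map (x + ·) (𝓝[>] 0) := by simp [map_add_left_nhdsGT]
  rw [hasDerivWithinAt_iff_tendsto_slope' (by simp), this, tendsto_map'_iff]
  simp [slope, Function.comp_def]

theorem ContinuousOn.tendsto_slope_integral [CompleteSpace E] {f : ℝ → E}
    (hf : ContinuousOn f (Ici 0)) {t : ℝ} (ht : 0 ≤ t) :
    Tendsto (fun h => h⁻¹ • ((∫ s in 0..t + h, f s) - ∫ s in 0..t, f s)) (𝓝[>] 0)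
      (𝓝 (f t)) := by
  have hderiv : HasDerivWithinAt (fun u => ∫ s in 0..u, f s) (f t) (Ici t) t :=
    integral_hasDerivWithinAt_right (hf.intervalIntegrable_of_Ici le_rfl ht)
      ((hf.mono (Ioi_subset_Ici ht)).stronglyMeasurableAtFilter_nhdsWithin measurableSet_Ioi t)
      ((hf t ht).mono (Ioi_subset_Ici ht))
  exact hasDerivWithinAt_Ioi_iff_tendsto_slope_zero_right.mp hderiv.Ioi_of_Ici

end RightDerivative

section Semigroup

variable {X : Type*} [NormedAddCommGroup X] [NormedSpace ℝ X]

structure IsC0Semigroup (T : ℝ → X →L[ℝ] X) : Prop where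
  map_zero : T 0 = 1
  map_add : ∀ s t : ℝ, 0 ≤ s → 0 ≤ t → T (s + t) = (T s).comp (T t)
  continuousOn_apply : ∀ x : X, ContinuousOn (fun t => T t x) (Ici 0)

noncomputable def cesaroMean (T : ℝ → X →L[ℝ] X) (t : ℝ) (z : X) : X :=
  t⁻¹ • ∫ s in 0..t, T s z

variable {T : ℝ → X →L[ℝ] X} {z : X} {t : ℝ}

theorem genA_eq_of_tendsto {y : X}
    (h : Tendsto (fun t => t⁻¹ • (T t z - z)) (𝓝[>] 0) (𝓝 y)) : genA T z = -y := by
  rw [genA, h.limUnder_eq]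

theorem inDom.tendsto (hz : inDom T z) :
    Tendsto (fun t => t⁻¹ • (T t z - z)) (𝓝[>] 0) (𝓝 (-genA T z)) := by
  obtain ⟨y, hy⟩ := hz
  rwa [genA_eq_of_tendsto hy, neg_neg]

namespace IsC0Semigroup

theorem intervalIntegrable (hT : IsC0Semigroup T) (z : X) {a b : ℝ} (ha : 0 ≤ a) (hb : 0 ≤ b) :
    IntervalIntegrable (fun s => T s z) volume a b :=
  (hT.continuousOn_apply z).intervalIntegrable_of_Ici ha hb

theorem hasDerivWithinAt_apply (hT : IsC0Semigroup T) (hz : inDom T z) {s : ℝ} (hs : 0 ≤ s) :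
    HasDerivWithinAt (fun u => T u z) (-T s (genA T z)) (Ioi s) s := by
  rw [hasDerivWithinAt_Ioi_iff_tendsto_slope_zero_right, ← map_neg]
  refine (((T s).continuous.tendsto _).comp hz.tendsto).congr' ?_
  filter_upwards [self_mem_nhdsWithin] with h (hh : 0 < h)
  simp [hT.map_add s h hs hh.le]

variable [CompleteSpace X]

theorem apply_integral (hT : IsC0Semigroup T) (z : X) {h : ℝ} (hh : 0 ≤ h) (ht : 0 ≤ t) :
    T h (∫ s in 0..t, T s z) = (∫ s in 0..t + h, T s z) - ∫ s in 0..h, T s z := by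
  rw [← (T h).intervalIntegral_comp_comm (hT.intervalIntegrable z le_rfl ht),
    integral_interval_sub_left (hT.intervalIntegrable z le_rfl (by linarith))
      (hT.intervalIntegrable z le_rfl hh)]
  calc ∫ s in 0..t, T h (T s z) = ∫ s in 0..t, T (s + h) z := by
        refine integral_congr fun s hs => ?_
        rw [uIcc_of_le ht] at hs
        simp [add_comm s h, hT.map_add h s hh hs.1]
    _ = ∫ s in h..t + h, T s z := by
        rw [integral_comp_add_right (fun s => T s z), zero_add]

theorem tendsto_slope_cesaroMean (hT : IsC0Semigroup T) (z : X) (ht : 0 < t) :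
    Tendsto (fun h => h⁻¹ • (T h (cesaroMean T t z) - cesaroMean T t z)) (𝓝[>] 0)
      (𝓝 (t⁻¹ • (T t z - z))) := by
  have hslope := (((hT.continuousOn_apply z).tendsto_slope_integral ht.le).sub
    ((hT.continuousOn_apply z).tendsto_slope_integral le_rfl)).const_smul t⁻¹
  rw [hT.map_zero, one_apply_eq_self] at hslope
  refine hslope.congr' ?_
  filter_upwards [self_mem_nhdsWithin] with h (hh : 0 < h)
  simp only [cesaroMean, map_smul, hT.apply_integral z hh.le ht.le, zero_add, integral_same,
    sub_zero]
  module

theorem inDom_cesaroMean (hT : IsC0Semigroup T) (z : X) (ht : 0 < t) :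
    inDom T (cesaroMean T t z) :=
  ⟨_, hT.tendsto_slope_cesaroMean z ht⟩

theorem genA_cesaroMean (hT : IsC0Semigroup T) (z : X) (ht : 0 < t) :
    genA T (cesaroMean T t z) = t⁻¹ • (z - T t z) := by
  rw [genA_eq_of_tendsto (hT.tendsto_slope_cesaroMean z ht), ← smul_neg, neg_sub]

theorem integral_apply_genA (hT : IsC0Semigroup T) (hz : inDom T z) (ht : 0 ≤ t) :
    ∫ s in 0..t, T s (genA T z) = z - T t z := by
  have hftc := integral_eq_sub_of_hasDeriv_right_of_le ht
    ((hT.continuousOn_apply z).mono Icc_subset_Ici_self)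
    (fun s hs => hT.hasDerivWithinAt_apply hz hs.1.le)
    (hT.intervalIntegrable (genA T z) le_rfl ht).neg
  rw [intervalIntegral.integral_neg, hT.map_zero, one_apply_eq_self] at hftc
  rw [← neg_neg (∫ s in 0..t, T s (genA T z)), hftc, neg_sub]

theorem genA_cesaroMean_of_inDom (hT : IsC0Semigroup T) (hz : inDom T z) (ht : 0 < t) :
    genA T (cesaroMean T t z) = cesaroMean T t (genA T z) := by
  rw [hT.genA_cesaroMean z ht, cesaroMean, hT.integral_apply_genA hz ht.le]

theorem inDomPow_succ_cesaroMean (hT : IsC0Semigroup T) (ht : 0 < t) :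
    ∀ {j : ℕ} {z : X}, inDomPow T j z → inDomPow T (j + 1) (cesaroMean T t z)
  | 0, z, _ => ⟨hT.inDom_cesaroMean z ht, trivial⟩
  | _ + 1, z, hz => ⟨hT.inDom_cesaroMean z ht, by
      rw [hT.genA_cesaroMean_of_inDom hz.1 ht]
      exact hT.inDomPow_succ_cesaroMean ht hz.2⟩

theorem iterate_genA_cesaroMean (hT : IsC0Semigroup T) (ht : 0 < t) :
    ∀ {j : ℕ} {z : X}, inDomPow T j z →
      (genA T)^[j] (cesaroMean T t z) = cesaroMean T t ((genA T)^[j] z)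
  | 0, _, _ => rfl
  | _ + 1, _, hz => by
      rw [Function.iterate_succ_apply, Function.iterate_succ_apply,
        hT.genA_cesaroMean_of_inDom hz.1 ht, hT.iterate_genA_cesaroMean ht hz.2]

theorem tendsto_cesaroMean (hT : IsC0Semigroup T) (z : X) :
    Tendsto (fun t => cesaroMean T t z) (𝓝[>] 0) (𝓝 z) := by
  simpa [cesaroMean, hT.map_zero] using
    (hT.continuousOn_apply z).tendsto_slope_integral le_rfl

end IsC0Semigroup

end Semigroup

/-- Favard space estimate: a bound `‖Sx‖ ≤ C‖A^k x‖` on `D(A^k)` extends to the k-th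
Favard space, with `‖A^k x‖` replaced by `limsup_{t↓0} t⁻¹‖T(t)A^{k-1}x - A^{k-1}x‖`. -/
theorem favard_estimate {X : Type*} [NormedAddCommGroup X] [NormedSpace ℝ X]
    [CompleteSpace X]
    (T : ℝ → X →L[ℝ] X) (hT0 : T 0 = 1)
    (hTadd : ∀ s t : ℝ, 0 ≤ s → 0 ≤ t → T (s + t) = (T s).comp (T t))
    (hTcont : ∀ x : X, ContinuousOn (fun t => T t x) (Set.Ici (0 : ℝ)))
    (S : X →L[ℝ] X) (C : ℝ) (hC : 0 ≤ C) (k : ℕ) (hk : 1 ≤ k)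
    (hS : ∀ x : X, inDomPow T k x → ‖S x‖ ≤ C * ‖(genA T)^[k] x‖)
    (x : X) (hx : inDomPow T (k - 1) x)
    (L : ℝ≥0∞)
    (hLdef : L = Filter.limsup
      (fun t : ℝ => ENNReal.ofReal (t⁻¹ * ‖T t ((genA T)^[k - 1] x) - (genA T)^[k - 1] x‖))
      (𝓝[>] (0 : ℝ)))
    (hLfin : L ≠ ⊤) :
    ‖S x‖ ≤ C * L.toReal := by
  obtain ⟨n, rfl⟩ : ∃ n, k = n + 1 := ⟨k - 1, (Nat.succ_pred_eq_of_pos hk).symm⟩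
  rw [Nat.add_sub_cancel] at hx hLdef
  subst hLdef
  have hT : IsC0Semigroup T := ⟨hT0, hTadd, hTcont⟩
  set y := (genA T)^[n] x
  have hbound : ∀ᶠ t in 𝓝[>] 0, ‖S (cesaroMean T t x)‖ ≤ C * (t⁻¹ * ‖T t y - y‖) := by
    filter_upwards [self_mem_nhdsWithin] with t (ht : 0 < t)
    calc ‖S (cesaroMean T t x)‖ ≤ C * ‖(genA T)^[n + 1] (cesaroMean T t x)‖ :=
          hS _ (hT.inDomPow_succ_cesaroMean ht hx)
      _ = C * (t⁻¹ * ‖T t y - y‖) := by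
          rw [Function.iterate_succ_apply', hT.iterate_genA_cesaroMean ht hx,
            hT.genA_cesaroMean _ ht, norm_smul, norm_sub_rev, norm_inv, Real.norm_of_nonneg ht.le]
  exact le_mul_toReal_limsup_ofReal hC
    ((S.continuous.tendsto x).comp (hT.tendsto_cesaroMean x)).norm hbound hLfin
end
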